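/- arXiv:1612.00150 — 4 statements merged into one kernel-verified Lean document; each statement's English description precedes it below -/
import Mathlib

section
/- (Krasnosel'skii–Mann iteration) Let H be a finite-dimensional real inner product space, let P : H → H be nonexpansive (‖Px − Py‖ ≤ ‖x − y‖ for all x, y ∈ H), let β ∈ (0,1), and define the averaged operator Q = (1−β)·id + β·P. Suppose the fixed point set of Q is nonempty. Then from any starting point z⁰ ∈ H, the iteration z^{k+1} = Q z^k = (1−β)z^k + βPz^k produces a sequence {z^k} that converges to a point z* with Qz* = z* (equivalently, Pz* = z*). -/
open Filter Topology Function

/-!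
For a fixed point `w` of `P`, the identity
`‖(1 - β) a + β b‖² = (1 - β) ‖a‖² + β ‖b‖² - β (1 - β) ‖a - b‖²` with `a = x - w`, `b = P x - w`
gives `‖Q x - w‖² + β (1 - β) ‖x - P x‖² ≤ ‖x - w‖²`. So the iterates approach every fixed point
of `P` (Fejér monotonicity), and the residuals `xₖ - P xₖ` are bounded by the decrease of the
convergent sequence `‖xₖ - w‖²`, hence tend to `0`. In finite dimension the bounded iterates have
a convergent subsequence; its limit is a fixed point by continuity of `P`, and since the distances
to that fixed point decrease, the whole sequence converges to it.
-/

section Fejer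

variable {X : Type*} [PseudoMetricSpace X] [ProperSpace X]

theorem exists_tendsto_of_antitone_dist {u : ℕ → X} {F : Set X} (hF : F.Nonempty)
    (hfejer : ∀ w ∈ F, Antitone fun k => dist (u k) w)
    (hcluster : ∀ x (φ : ℕ → ℕ), StrictMono φ → Tendsto (u ∘ φ) atTop (𝓝 x) → x ∈ F) :
    ∃ x ∈ F, Tendsto u atTop (𝓝 x) := by
  obtain ⟨w, hw⟩ := hF
  have hbounded : ∀ k, u k ∈ Metric.closedBall w (dist (u 0) w) :=
    fun k => hfejer w hw (Nat.zero_le k)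
  obtain ⟨x, -, φ, hφ, hux⟩ := (isCompact_closedBall w _).tendsto_subseq hbounded
  have hxF := hcluster x φ hφ hux
  refine ⟨x, hxF, tendsto_iff_dist_tendsto_zero.2 ?_⟩
  have hinf := tendsto_atTop_ciInf (hfejer x hxF)
    ⟨0, Set.forall_mem_range.2 fun _ => dist_nonneg⟩
  have hsub : Tendsto (fun j => dist (u (φ j)) x) atTop (𝓝 0) :=
    tendsto_iff_dist_tendsto_zero.1 hux
  rwa [tendsto_nhds_unique (hinf.comp hφ.tendsto_atTop) hsub] at hinf

end Fejer

theorem isFixedPt_of_tendsto_sub_apply {E α : Type*} [AddGroup E] [TopologicalSpace E]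
    [IsTopologicalAddGroup E] [T2Space E] {l : Filter α} [l.NeBot] {P : E → E} {v : α → E}
    {x : E} (hP : ContinuousAt P x) (hv : Tendsto v l (𝓝 x))
    (hres : Tendsto (fun a => v a - P (v a)) l (𝓝 0)) : IsFixedPt P x :=
  (sub_eq_zero.1 (tendsto_nhds_unique (hv.sub (hP.tendsto.comp hv)) hres)).symm

theorem norm_one_sub_smul_add_smul_sq {H : Type*} [NormedAddCommGroup H]
    [InnerProductSpace ℝ H] (β : ℝ) (a b : H) :
    ‖(1 - β) • a + β • b‖ ^ 2
      = (1 - β) * ‖a‖ ^ 2 + β * ‖b‖ ^ 2 - β * (1 - β) * ‖a - b‖ ^ 2 := by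
  simp only [norm_add_sq_real, norm_sub_sq_real, norm_smul, real_inner_smul_left,
    real_inner_smul_right, mul_pow, Real.norm_eq_abs, sq_abs]
  ring

section Averaged

variable {H : Type*}

def averagedMap [AddCommGroup H] [Module ℝ H] (β : ℝ) (P : H → H) (x : H) : H :=
  (1 - β) • x + β • P x

variable {β : ℝ} {P : H → H} {x w : H}

section Module

variable [AddCommGroup H] [Module ℝ H]

theorem averagedMap_sub :
    averagedMap β P x - w = (1 - β) • (x - w) + β • (P x - w) := by
  simp only [averagedMap, sub_smul, one_smul, smul_sub]
  abel

theorem isFixedPt_averagedMap_iff (hβ : β ≠ 0) :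
    IsFixedPt (averagedMap β P) x ↔ IsFixedPt P x := by
  rw [IsFixedPt, IsFixedPt, ← sub_eq_zero, averagedMap_sub, sub_self, smul_zero, zero_add,
    smul_eq_zero, sub_eq_zero, or_iff_right hβ]

end Module

section InnerProduct

variable [NormedAddCommGroup H] [InnerProductSpace ℝ H]

theorem norm_averagedMap_sub_sq_add_le (hP : ∀ x y, ‖P x - P y‖ ≤ ‖x - y‖) (hβ : 0 ≤ β)
    (hw : IsFixedPt P w) :
    ‖averagedMap β P x - w‖ ^ 2 + β * (1 - β) * ‖x - P x‖ ^ 2 ≤ ‖x - w‖ ^ 2 := by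
  have hPw : ‖P x - w‖ ^ 2 ≤ ‖x - w‖ ^ 2 := by
    simpa only [hw.eq] using pow_le_pow_left₀ (norm_nonneg _) (hP x w) 2
  rw [averagedMap_sub, norm_one_sub_smul_add_smul_sq, sub_sub_sub_cancel_right]
  nlinarith

theorem norm_averagedMap_sub_le (hP : ∀ x y, ‖P x - P y‖ ≤ ‖x - y‖) (hβ0 : 0 ≤ β)
    (hβ1 : β ≤ 1) (hw : IsFixedPt P w) : ‖averagedMap β P x - w‖ ≤ ‖x - w‖ := by
  have hsq := norm_averagedMap_sub_sq_add_le (x := x) hP hβ0 hw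
  have hres : 0 ≤ β * (1 - β) * ‖x - P x‖ ^ 2 := by
    have : 0 ≤ 1 - β := by linarith
    positivity
  exact (sq_le_sq₀ (norm_nonneg _) (norm_nonneg _)).1 (by linarith)

theorem antitone_dist_averagedMap_iterate (hP : ∀ x y, ‖P x - P y‖ ≤ ‖x - y‖) (hβ0 : 0 ≤ β)
    (hβ1 : β ≤ 1) (hw : IsFixedPt P w) (x₀ : H) :
    Antitone fun k => dist ((averagedMap β P)^[k] x₀) w :=
  antitone_nat_of_succ_le fun k => by
    simpa only [iterate_succ_apply', dist_eq_norm] using norm_averagedMap_sub_le hP hβ0 hβ1 hw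

theorem tendsto_sub_apply_averagedMap_iterate (hP : ∀ x y, ‖P x - P y‖ ≤ ‖x - y‖)
    (hβ0 : 0 < β) (hβ1 : β < 1) (hw : IsFixedPt P w) (x₀ : H) :
    Tendsto (fun k => (averagedMap β P)^[k] x₀ - P ((averagedMap β P)^[k] x₀)) atTop (𝓝 0) := by
  set u := fun k => (averagedMap β P)^[k] x₀
  set d := fun k => ‖u k - w‖ ^ 2
  have hd : Antitone d := fun m n hmn => by
    simpa only [d, u, dist_eq_norm] using pow_le_pow_left₀ dist_nonneg
      (antitone_dist_averagedMap_iterate hP hβ0.le hβ1.le hw x₀ hmn) 2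
  have hdiff : Tendsto (fun k => d k - d (k + 1)) atTop (𝓝 0) := by
    have hlim := tendsto_atTop_ciInf hd ⟨0, Set.forall_mem_range.2 fun _ => by positivity⟩
    simpa using hlim.sub (hlim.comp (tendsto_add_atTop_nat 1))
  have hc : 0 < β * (1 - β) := mul_pos hβ0 (by linarith)
  have hsq : Tendsto (fun k => ‖u k - P (u k)‖ ^ 2) atTop (𝓝 0) := by
    refine squeeze_zero (fun k => by positivity) (fun k => ?_)
      (by simpa only [mul_zero] using hdiff.const_mul (β * (1 - β))⁻¹)
    rw [le_inv_mul_iff₀ hc]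
    have := norm_averagedMap_sub_sq_add_le (x := u k) hP hβ0.le hw
    simp only [d, u, iterate_succ_apply'] at this ⊢
    linarith
  rw [tendsto_zero_iff_norm_tendsto_zero]
  simpa [Real.sqrt_sq (norm_nonneg _)] using hsq.sqrt

end InnerProduct

end Averaged

/-- **Krasnosel'skii–Mann iteration.** Let `H` be a finite-dimensional real inner
product space, `P : H → H` nonexpansive, `β ∈ (0,1)`, and
`Q = (1-β)·id + β·P` the associated averaged operator. If `Q` has a fixed point,
then from any starting point `z0` the iteration `z^{k+1} = Q z^k` converges to a
fixed point `z*` of `Q` (equivalently, of `P`). -/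
theorem krasnoselskii_mann_iteration {H : Type*} [NormedAddCommGroup H]
    [InnerProductSpace ℝ H] [FiniteDimensional ℝ H]
    (P : H → H) (hP : ∀ x y : H, ‖P x - P y‖ ≤ ‖x - y‖)
    (β : ℝ) (hβ : β ∈ Set.Ioo (0 : ℝ) 1)
    (Q : H → H) (hQ : ∀ z : H, Q z = (1 - β) • z + β • P z)
    (hfix : ∃ z : H, Q z = z)
    (z0 : H) :
    ∃ zstar : H, Q zstar = zstar ∧ P zstar = zstar ∧
      Tendsto (fun k => Q^[k] z0) atTop (nhds zstar) := by
  obtain ⟨hβ0, hβ1⟩ := hβ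
  obtain rfl : Q = averagedMap β P := funext hQ
  have hfixed (z : H) : IsFixedPt (averagedMap β P) z ↔ IsFixedPt P z :=
    isFixedPt_averagedMap_iff hβ0.ne'
  obtain ⟨w, hw⟩ := hfix
  have hPcont : Continuous P :=
    (LipschitzWith.mk_one (by simpa only [dist_eq_norm] using hP)).continuous
  obtain ⟨zstar, hzstar, hlim⟩ := exists_tendsto_of_antitone_dist (F := fixedPoints P)
    ⟨w, (hfixed w).1 hw⟩
    (fun _ hv => antitone_dist_averagedMap_iterate hP hβ0.le hβ1.le hv z0)
    (fun _ φ hφ hx => isFixedPt_of_tendsto_sub_apply hPcont.continuousAt hx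
      ((tendsto_sub_apply_averagedMap_iterate hP hβ0 hβ1 ((hfixed w).1 hw) z0).comp
        hφ.tendsto_atTop))
  exact ⟨zstar, (hfixed zstar).2 hzstar, hzstar, hlim⟩
end

section
/- Let H be a real inner product space, let τ ≥ 1 be an integer, let c > 0, and define the symmetric (τ+1)×(τ+1) matrix U' = U₁ + c·U₂ (indices 0,…,τ), where U₁ has a single nonzero entry (U₁)_{00} = 1 and U₂ is tridiagonal with (U₂)_{00} = τ, (U₂)_{jj} = 2(τ−j)+1 for 1 ≤ j ≤ τ, and (U₂)_{j,j+1} = (U₂)_{j+1,j} = j − τ for 0 ≤ j ≤ τ−1. Then for any vectors a_0, a_1, …, a_τ ∈ H, Σ_{i=0}^{τ} Σ_{j=0}^{τ} (U')_{ij} ⟨a_i, a_j⟩ = ‖a_0‖² + c · Σ_{j=0}^{τ−1} (τ−j) ‖a_j − a_{j+1}‖². -/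
/-!
Expanding `‖a_k - a_{k+1}‖²` by bilinearity shows that `Σ_{k<τ} w_k ‖a_k - a_{k+1}‖²` is the
quadratic form of the tridiagonal matrix with off-diagonal entries `-w_k` and diagonal entries
`w_{i-1} + w_i` (reading `w_{-1} = w_τ = 0`). For `w_k = τ - k` these are exactly the entries
of `U₂`, and `(U₁)₀₀ = 1` contributes `‖a_0‖²`.
-/

open RealInnerProductSpace

/-- The tridiagonal matrix `U₂` (entries indexed by `0,…,τ`):
`(U₂)₀₀ = τ`, `(U₂)_{jj} = 2(τ-j)+1` for `1 ≤ j ≤ τ`, and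
`(U₂)_{j,j+1} = (U₂)_{j+1,j} = j - τ` for `0 ≤ j ≤ τ-1`. -/
noncomputable def U2fun (τ : ℕ) : ℕ → ℕ → ℝ := fun i j =>
  if i = j then (if i = 0 then (τ : ℝ) else 2 * ((τ : ℝ) - (i : ℝ)) + 1)
  else if j = i + 1 then (i : ℝ) - (τ : ℝ)
  else if i = j + 1 then (j : ℝ) - (τ : ℝ)
  else 0

/-- `U' = U₁ + c·U₂`, where `U₁` has a single nonzero entry `(U₁)₀₀ = 1`. -/
noncomputable def U'fun (τ : ℕ) (c : ℝ) : ℕ → ℕ → ℝ := fun i j =>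
  (if i = 0 ∧ j = 0 then (1 : ℝ) else 0) + c * U2fun τ i j

open Finset

def tridiag {R : Type*} [Zero R] (d e : ℕ → R) (i j : ℕ) : R :=
  if i = j then d i else if j = i + 1 then e i else if i = j + 1 then e j else 0

theorem sum_range_sum_range_ite_eq_succ {M : Type*} [AddCommMonoid M]
    (f : ℕ → ℕ → M) (n : ℕ) :
    ∑ i ∈ range (n + 1), ∑ j ∈ range (n + 1), (if j = i + 1 then f i j else 0) =
      ∑ i ∈ range n, f i (i + 1) := by
  simp only [sum_ite_eq', mem_range, add_lt_add_iff_right]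
  rw [sum_range_succ, if_neg (lt_irrefl n), add_zero]
  exact sum_congr rfl fun i hi => if_pos (mem_range.mp hi)

theorem sum_range_sum_range_tridiag_mul {R : Type*} [NonUnitalNonAssocSemiring R]
    (d e : ℕ → R) (g : ℕ → ℕ → R) (n : ℕ) :
    ∑ i ∈ range (n + 1), ∑ j ∈ range (n + 1), tridiag d e i j * g i j =
      ∑ i ∈ range (n + 1), d i * g i i + ∑ i ∈ range n, e i * (g i (i + 1) + g (i + 1) i) := by
  have hsplit : ∀ i j, tridiag d e i j * g i j =
      ((if i = j then d i * g i j else 0) + (if j = i + 1 then e i * g i j else 0))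
        + (if i = j + 1 then e j * g i j else 0) := by
    intro i j
    unfold tridiag
    split_ifs <;> first | (exfalso; omega) | simp
  simp only [hsplit, sum_add_distrib, sum_ite_eq]
  rw [sum_range_sum_range_ite_eq_succ (fun i j => e i * g i j), sum_comm,
    sum_range_sum_range_ite_eq_succ (fun j i => e j * g i j), add_assoc, ← sum_add_distrib,
    sum_congr rfl fun i hi => if_pos hi]
  simp only [mul_add]

theorem U2fun_eq_tridiag (τ : ℕ) :
    U2fun τ = tridiag (fun i => if i = 0 then (τ : ℝ) else 2 * ((τ : ℝ) - i) + 1)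
      (fun i => (i : ℝ) - τ) :=
  rfl

theorem sum_range_U2fun_diag_mul (τ : ℕ) (g : ℕ → ℝ) :
    ∑ i ∈ range (τ + 1), (if i = 0 then (τ : ℝ) else 2 * ((τ : ℝ) - i) + 1) * g i =
      ∑ k ∈ range τ, ((τ : ℝ) - k) * (g k + g (k + 1)) := by
  calc ∑ i ∈ range (τ + 1), (if i = 0 then (τ : ℝ) else 2 * ((τ : ℝ) - i) + 1) * g i
      = ∑ k ∈ range τ, (((τ : ℝ) - k) + ((τ : ℝ) - (k + 1 : ℕ))) * g (k + 1) + τ * g 0 := by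
        rw [sum_range_succ']
        congr 1
        refine sum_congr rfl fun k _ => ?_
        rw [if_neg k.succ_ne_zero]
        push_cast
        ring
    _ = ∑ k ∈ range τ, ((τ : ℝ) - k) * g (k + 1) + ∑ k ∈ range (τ + 1), ((τ : ℝ) - k) * g k := by
        rw [sum_range_succ' (fun k => ((τ : ℝ) - k) * g k)]
        simp only [add_mul, sum_add_distrib, Nat.cast_zero, sub_zero]
        ring
    _ = ∑ k ∈ range τ, ((τ : ℝ) - k) * (g k + g (k + 1)) := by
        rw [sum_range_succ, sub_self, zero_mul, add_zero, ← sum_add_distrib]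
        simp only [mul_add, add_comm]

theorem sum_range_sum_range_U2fun_mul_inner {H : Type*} [NormedAddCommGroup H]
    [InnerProductSpace ℝ H] (τ : ℕ) (a : ℕ → H) :
    ∑ i ∈ range (τ + 1), ∑ j ∈ range (τ + 1), U2fun τ i j * ⟪a i, a j⟫ =
      ∑ k ∈ range τ, ((τ : ℝ) - k) * ‖a k - a (k + 1)‖ ^ 2 := by
  rw [U2fun_eq_tridiag, sum_range_sum_range_tridiag_mul,
    sum_range_U2fun_diag_mul τ fun i => ⟪a i, a i⟫, ← sum_add_distrib]
  refine sum_congr rfl fun k _ => ?_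
  rw [norm_sub_sq_real, ← real_inner_self_eq_norm_sq, ← real_inner_self_eq_norm_sq,
    real_inner_comm (a (k + 1)) (a k)]
  ring

theorem U_metric_quadratic_form_general {H : Type*} [NormedAddCommGroup H]
    [InnerProductSpace ℝ H]
    (τ : ℕ) (c : ℝ)
    (a : ℕ → H) :
    ∑ i ∈ Finset.range (τ + 1), ∑ j ∈ Finset.range (τ + 1),
        U'fun τ c i j * ⟪a i, a j⟫
      = ‖a 0‖ ^ 2 + c * ∑ j ∈ Finset.range τ, ((τ : ℝ) - (j : ℝ)) * ‖a j - a (j + 1)‖ ^ 2 := by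
  simp only [U'fun, add_mul, sum_add_distrib, mul_assoc, ← mul_sum,
    sum_range_sum_range_U2fun_mul_inner]
  congr 1
  simp [ite_and]

/-- **Quadratic form of the delay-absorbing metric.** For any vectors
`a₀,…,a_τ` in a real inner product space,
`Σᵢ Σⱼ (U')_{ij} ⟨aᵢ, aⱼ⟩ = ‖a₀‖² + c Σ_{j=0}^{τ-1} (τ-j) ‖aⱼ - a_{j+1}‖²`. -/
theorem U_metric_quadratic_form {H : Type*} [NormedAddCommGroup H]
    [InnerProductSpace ℝ H]
    (τ : ℕ) (hτ : 1 ≤ τ) (c : ℝ) (hc : 0 < c)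
    (a : ℕ → H) :
    ∑ i ∈ Finset.range (τ + 1), ∑ j ∈ Finset.range (τ + 1),
        U'fun τ c i j * ⟪a i, a j⟫
      = ‖a 0‖ ^ 2 + c * ∑ j ∈ Finset.range τ, ((τ : ℝ) - (j : ℝ)) * ‖a j - a (j + 1)‖ ^ 2 :=
  U_metric_quadratic_form_general τ c a
end

section
/- Let τ ≥ 1 be an integer and c > 0, and define the symmetric (τ+1)×(τ+1) real matrix U' = U₁ + c·U₂ (indices 0,…,τ), where U₁ has a single nonzero entry (U₁)_{00} = 1 and U₂ is tridiagonal with (U₂)_{00} = τ, (U₂)_{jj} = 2(τ−j)+1 for 1 ≤ j ≤ τ, and (U₂)_{j,j+1} = (U₂)_{j+1,j} = j − τ for 0 ≤ j ≤ τ−1. Then U' is positive definite. -/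
/-!
Let `D` be the backward difference matrix, `(D x)ₘ = xₘ₋₁ - xₘ` with `x₋₁ = 0`, and
`W = diag(1, cτ, c(τ-1), …, c)`. Then `U' = Dᵀ W D`; this is the identity
`aᵀ U' a = a₀² + c ∑ⱼ (τ - j) (aⱼ - aⱼ₊₁)²`. Since `D` is lower triangular with `-1` on the
diagonal it is invertible, and `W` is a positive diagonal matrix, so `U'` is positive definite.
-/

open Matrix

namespace Matrix

variable {R : Type*} [CommRing R]

def backwardDiff (n : ℕ) : Matrix (Fin n) (Fin n) R :=
  of fun m i => (if (i : ℕ) + 1 = m then 1 else 0) - (if (i : ℕ) = m then 1 else 0)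

theorem backwardDiff_isLowerTriangular (n : ℕ) :
    (backwardDiff n : Matrix (Fin n) (Fin n) R).IsLowerTriangular := by
  intro m i (hmi : (m : ℕ) < i)
  simp only [backwardDiff, of_apply]
  rw [if_neg (by omega), if_neg (by omega), sub_zero]

theorem det_backwardDiff (n : ℕ) :
    (backwardDiff n : Matrix (Fin n) (Fin n) R).det = (-1) ^ n := by
  rw [det_of_isLowerTriangular _ (backwardDiff_isLowerTriangular n)]
  simp [backwardDiff]

theorem mulVec_backwardDiff_injective (n : ℕ) :
    Function.Injective (backwardDiff n : Matrix (Fin n) (Fin n) R).mulVec :=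
  mulVec_injective_of_det_mem_nonZeroDivisors <| by
    rw [det_backwardDiff]
    exact (isUnit_neg_one.pow n).mem_nonZeroDivisors

end Matrix

def U'weight (τ : ℕ) (c : ℝ) : ℕ → ℝ
  | 0 => 1
  | k + 1 => c * (τ - k)

theorem U'weight_pos {τ : ℕ} {c : ℝ} (hc : 0 < c) {m : ℕ} (hm : m ≤ τ) :
    0 < U'weight τ c m := by
  rcases m with _ | k
  · exact one_pos
  · exact mul_pos hc (sub_pos.2 (by exact_mod_cast hm))

theorem U'fun_eq_sum_range {τ : ℕ} (c : ℝ) {i j : ℕ} (hi : i ≤ τ) (hj : j ≤ τ) :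
    U'fun τ c i j = ∑ m ∈ Finset.range (τ + 1),
      ((if i + 1 = m then 1 else 0) - (if i = m then 1 else 0)) * U'weight τ c m *
        ((if j + 1 = m then 1 else 0) - (if j = m then 1 else 0)) := by
  simp only [sub_mul, mul_sub, ite_mul, mul_ite, one_mul, mul_one, zero_mul, mul_zero,
    Finset.sum_sub_distrib, Finset.sum_ite_eq, Finset.mem_range, U'fun, U2fun]
  rw [if_pos (Nat.lt_succ_of_le hj)]
  -- `j = τ` is the last column of `D`, the only one without a subdiagonal entry
  rcases hj.lt_or_eq with hj | rfl <;>
  rcases j with _ | j <;> rcases i with _ | i <;> simp [U'weight] <;> split_ifs <;>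
    first
    | omega
    | (subst_vars; push_cast; ring1)

theorem U'_eq_conjTranspose_backwardDiff_mul (τ : ℕ) (c : ℝ) :
    (of fun i j : Fin (τ + 1) => U'fun τ c i j) =
      (backwardDiff (τ + 1))ᴴ * diagonal (fun m : Fin (τ + 1) => U'weight τ c m) *
        backwardDiff (τ + 1) := by
  ext i j
  rw [mul_apply]
  simp only [mul_diagonal, conjTranspose_apply, star_trivial, backwardDiff, of_apply]
  rw [U'fun_eq_sum_range c i.is_le j.is_le]
  exact (Fin.sum_univ_eq_sum_range _ _).symm

theorem U_metric_posDef_general (τ : ℕ) (c : ℝ) (hc : 0 < c) :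
    (Matrix.of fun i j : Fin (τ + 1) => U'fun τ c (i : ℕ) (j : ℕ)).PosDef := by
  rw [U'_eq_conjTranspose_backwardDiff_mul]
  exact (PosDef.diagonal fun m => U'weight_pos hc m.is_le).conjTranspose_mul_mul_same
    (mulVec_backwardDiff_injective _)

/-- For `τ ≥ 1` and `c > 0`, the `(τ+1)×(τ+1)` matrix `U' = U₁ + c·U₂` is
positive definite. -/
theorem U_metric_posDef (τ : ℕ) (hτ : 1 ≤ τ) (c : ℝ) (hc : 0 < c) :
    (Matrix.of fun i j : Fin (τ + 1) => U'fun τ c (i : ℕ) (j : ℕ)).PosDef :=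
  U_metric_posDef_general τ c hc
end

section
/- Assume: (a) M ∈ ℝ^{N×N} is symmetric positive definite with condition number κ and M-norm ‖Z‖_M² = tr(Zᵀ M Z) on ℝ^{N×p}; (b) the row indices {1,…,N} are partitioned into n nonempty disjoint blocks, T : ℝ^{N×p} → ℝ^{N×p} is nonexpansive with respect to ‖·‖_M, S = I − T, and S_i Ẑ denotes the block-i restriction of S Ẑ (zero outside block i); (c) Z* satisfies TZ* = Z*; (d) q_1,…,q_n > 0 satisfy Σ_i q_i = 1, and q_min = min_i q_i; (e) τ ≥ 0 is an integer, Z^{k−τ},…,Z^k ∈ ℝ^{N×p}, J ⊆ {k−τ,…,k−1}, and Ẑ = Z^k + Σ_{d∈J}(Z^d − Z^{d+1}); (f) η > 0 and Z̄ = Z^k − η·SẐ. Then for every ξ > 0, Σ_{i=1}^n q_i ‖Z^k − (η/(n q_i)) S_i Ẑ − Z*‖_M² ≤ ‖Z^k − Z*‖_M² + (ξ/n) Σ_{d=k−τ}^{k−1} ‖Z^d − Z^{d+1}‖_M² + (1/n)·(τ/ξ + κ/(n q_min) − 1/η)·‖Z^k − Z̄‖_M². -/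
/-!
Averaging over the agent `i` that performs the update, the squared `M`-distance to `Z*`
expands as `‖Zᵏ - Z*‖² - (2η/n)⟨Zᵏ - Z*, SẐ⟩ + (η/n)² Σᵢ ‖SᵢẐ‖²/qᵢ`. The quadratic term is at
most `κ/q_min · ‖SẐ‖²`: the `M`-norm lies between `λ_min` and `λ_max` times the Frobenius norm,
and the Frobenius norm is additive over the blocks. For the cross term write
`Zᵏ = Ẑ - Σ_{d∈J} (Zᵈ - Zᵈ⁺¹)`. Nonexpansiveness of `T` at its fixed point gives
`‖SẐ‖² ≤ 2⟨Ẑ - Z*, SẐ⟩`, and each of the at most `τ` delay terms is split by Young's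
inequality with weight `ξ`.
-/

open Matrix

/-- The squared `M`-norm `‖Z‖_M² = tr(Zᵀ M Z)` on `ℝ^{N×p}`. -/
noncomputable def Mnorm2 {N p : ℕ} (M : Matrix (Fin N) (Fin N) ℝ)
    (Z : Matrix (Fin N) (Fin p) ℝ) : ℝ :=
  (Zᵀ * M * Z).trace

/-- `blockRestrict b i A` agrees with `A` on the rows in block `i` (rows `j` with
`b j = i`) and is zero elsewhere. -/
def blockRestrict {N p n : ℕ} (b : Fin N → Fin n) (i : Fin n)
    (A : Matrix (Fin N) (Fin p) ℝ) : Matrix (Fin N) (Fin p) ℝ :=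
  Matrix.of fun j l => if b j = i then A j l else 0

open Finset

namespace Matrix.IsHermitian

variable {m : Type*} [Fintype m] [DecidableEq m] {A : Matrix m m ℝ}

lemma vecMul_eigenvectorUnitary (hA : A.IsHermitian) (x : m → ℝ) :
    vecMul x (hA.eigenvectorUnitary : Matrix m m ℝ) =
      star (hA.eigenvectorUnitary : Matrix m m ℝ) *ᵥ x := by
  ext j
  simp [vecMul, mulVec, dotProduct, star_apply, mul_comm]

lemma dotProduct_mulVec_eq_sum_eigenvalues (hA : A.IsHermitian) (x : m → ℝ) :
    x ⬝ᵥ A *ᵥ x =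
      ∑ i, hA.eigenvalues i * (star (hA.eigenvectorUnitary : Matrix m m ℝ) *ᵥ x) i ^ 2 := by
  have hspec : A = (hA.eigenvectorUnitary : Matrix m m ℝ) * diagonal hA.eigenvalues *
      star (hA.eigenvectorUnitary : Matrix m m ℝ) := by
    conv_lhs => rw [hA.spectral_theorem, Unitary.conjStarAlgAut_apply]
    rfl
  conv_lhs => rw [hspec]
  rw [← mulVec_mulVec, ← mulVec_mulVec, dotProduct_mulVec, vecMul_eigenvectorUnitary]
  simp only [dotProduct, mulVec_diagonal]
  exact sum_congr rfl fun i _ => by ring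

lemma dotProduct_self_eq_sum (hA : A.IsHermitian) (x : m → ℝ) :
    x ⬝ᵥ x = ∑ i, (star (hA.eigenvectorUnitary : Matrix m m ℝ) *ᵥ x) i ^ 2 := by
  have hx : (hA.eigenvectorUnitary : Matrix m m ℝ) *ᵥ
      (star (hA.eigenvectorUnitary : Matrix m m ℝ) *ᵥ x) = x := by
    rw [mulVec_mulVec, Unitary.mul_star_self_of_mem hA.eigenvectorUnitary.2, one_mulVec]
  conv_lhs => arg 2; rw [← hx]
  rw [dotProduct_mulVec, vecMul_eigenvectorUnitary]
  simp only [dotProduct, sq]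

lemma dotProduct_mulVec_le (hA : A.IsHermitian) {c : ℝ} (hc : ∀ i, hA.eigenvalues i ≤ c)
    (x : m → ℝ) : x ⬝ᵥ A *ᵥ x ≤ c * (x ⬝ᵥ x) := by
  rw [hA.dotProduct_mulVec_eq_sum_eigenvalues, hA.dotProduct_self_eq_sum, mul_sum]
  gcongr with i
  exact hc i

lemma le_dotProduct_mulVec (hA : A.IsHermitian) {c : ℝ} (hc : ∀ i, c ≤ hA.eigenvalues i)
    (x : m → ℝ) : c * (x ⬝ᵥ x) ≤ x ⬝ᵥ A *ᵥ x := by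
  rw [hA.dotProduct_mulVec_eq_sum_eigenvalues, hA.dotProduct_self_eq_sum, mul_sum]
  gcongr with i
  exact hc i

end Matrix.IsHermitian

namespace LinearMap.BilinForm

variable {E : Type*} [AddCommGroup E] [Module ℝ E] {B : LinearMap.BilinForm ℝ E}

lemma IsSymm.apply_sub_sub (hB : B.IsSymm) (x y : E) :
    B (x - y) (x - y) = B x x - 2 * B x y + B y y := by
  simp only [map_sub, LinearMap.sub_apply, hB.eq y x]
  ring

lemma IsSymm.apply_sub_self_le_of_nonexpansive (hB : B.IsSymm) {T : E → E}
    (hT : ∀ x y, B (T x - T y) (T x - T y) ≤ B (x - y) (x - y)) {z : E} (hz : T z = z) (x : E) :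
    B (x - T x) (x - T x) ≤ 2 * B (x - z) (x - T x) := by
  have h := hT x z
  rw [hz, show T x - z = (x - z) - (x - T x) by abel, hB.apply_sub_sub] at h
  linarith

lemma IsPosSemidef.two_mul_apply_le (hB : B.IsPosSemidef) {ξ : ℝ} (hξ : 0 < ξ) (x y : E) :
    2 * B x y ≤ ξ * B x x + B y y / ξ := by
  have h := hB.isNonneg.nonneg (ξ • x - y)
  rw [hB.isSymm.apply_sub_sub] at h
  simp only [map_smul, LinearMap.smul_apply, smul_eq_mul] at h
  rw [← sub_nonneg, show ξ * B x x + B y y / ξ - 2 * B x y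
      = (ξ * (ξ * B x x) - 2 * (ξ * B x y) + B y y) / ξ by field_simp; ring]
  positivity

lemma IsSymm.sum_mul_apply_sub_div_smul {ι : Type*} (hB : B.IsSymm) (s : Finset ι) {q : ι → ℝ}
    (hq : ∀ i ∈ s, q i ≠ 0) (hqsum : ∑ i ∈ s, q i = 1) (w : E) (c : ℝ) (a : ι → E) :
    ∑ i ∈ s, q i * B (w - (c / q i) • a i) (w - (c / q i) • a i)
      = B w w - 2 * c * B w (∑ i ∈ s, a i) + c ^ 2 * ∑ i ∈ s, B (a i) (a i) / q i := by
  have h : ∀ i ∈ s, q i * B (w - (c / q i) • a i) (w - (c / q i) • a i)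
      = q i * B w w - 2 * c * B w (a i) + c ^ 2 * (B (a i) (a i) / q i) := fun i hi => by
    rw [hB.apply_sub_sub]
    simp only [map_smul, LinearMap.smul_apply, smul_eq_mul]
    field_simp [hq i hi]
  rw [sum_congr rfl h, sum_add_distrib, sum_sub_distrib, ← sum_mul, hqsum, map_sum, mul_sum,
    mul_sum, one_mul]

lemma IsPosSemidef.neg_two_mul_apply_le_of_delayed (hB : B.IsPosSemidef) {ι : Type*}
    {J W : Finset ι} (hJW : J ⊆ W) {τ : ℕ} (hW : #W ≤ τ) (D : ι → E) {x xhat z s : E}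
    (hxhat : xhat = x + ∑ d ∈ J, D d) (hs : B s s ≤ 2 * B (xhat - z) s)
    {η ξ : ℝ} (hη : 0 < η) (hξ : 0 < ξ) :
    -(2 * η) * B (x - z) s
      ≤ ξ * ∑ d ∈ W, B (D d) (D d) + (τ * (η ^ 2 / ξ) - η) * B s s := by
  have hsplit : B (x - z) s = B (xhat - z) s - ∑ d ∈ J, B (D d) s := by
    rw [hxhat, ← LinearMap.sum_apply, ← map_sum, ← LinearMap.sub_apply, ← map_sub]
    congr 2
    abel
  have hyoung d : 2 * η * B (D d) s ≤ ξ * B (D d) (D d) + η ^ 2 / ξ * B s s := by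
    have h := hB.two_mul_apply_le hξ (D d) (η • s)
    simp only [map_smul, LinearMap.smul_apply, smul_eq_mul] at h
    linarith [show η * (η * B s s) / ξ = η ^ 2 / ξ * B s s by ring]
  have hdelays := sum_le_sum fun d (_ : d ∈ J) => hyoung d
  rw [← mul_sum, sum_add_distrib, ← mul_sum, sum_const, nsmul_eq_mul] at hdelays
  have hwindow : ∑ d ∈ J, B (D d) (D d) ≤ ∑ d ∈ W, B (D d) (D d) :=
    sum_le_sum_of_subset_of_nonneg hJW fun d _ _ => hB.isNonneg.nonneg (D d)
  have hcard : (#J : ℝ) * (η ^ 2 / ξ * B s s) ≤ τ * (η ^ 2 / ξ * B s s) := by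
    gcongr
    · exact mul_nonneg (by positivity) (hB.isNonneg.nonneg s)
    · exact_mod_cast (card_le_card hJW).trans hW
  rw [hsplit]
  linear_combination hdelays + η * hs + ξ * hwindow + hcard

end LinearMap.BilinForm

section Mnorm

variable {N p : ℕ}

noncomputable def Minner (M : Matrix (Fin N) (Fin N) ℝ) :
    LinearMap.BilinForm ℝ (Matrix (Fin N) (Fin p) ℝ) :=
  LinearMap.mk₂ ℝ (fun X Y => (Xᵀ * M * Y).trace)
    (fun X X' Y => by simp [transpose_add, Matrix.add_mul])
    (fun c X Y => by simp [transpose_smul, Matrix.smul_mul])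
    (fun X Y Y' => by simp [Matrix.mul_add])
    (fun c X Y => by simp [Matrix.mul_smul])

@[simp]
lemma Minner_apply_self (M : Matrix (Fin N) (Fin N) ℝ) (X : Matrix (Fin N) (Fin p) ℝ) :
    Minner M X X = Mnorm2 M X := rfl

lemma Mnorm2_eq_sum_dotProduct_mulVec (M : Matrix (Fin N) (Fin N) ℝ)
    (X : Matrix (Fin N) (Fin p) ℝ) : Mnorm2 M X = ∑ l, Xᵀ l ⬝ᵥ M *ᵥ Xᵀ l := by
  simp only [Mnorm2, trace, diag_apply, mul_apply, transpose_apply, mulVec, dotProduct,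
    sum_mul, mul_sum]
  refine sum_congr rfl fun l _ => ?_
  rw [sum_comm]
  exact sum_congr rfl fun j _ => sum_congr rfl fun m _ => by ring

lemma isPosSemidef_Minner {M : Matrix (Fin N) (Fin N) ℝ} (hM : M.PosSemidef) :
    (Minner M : LinearMap.BilinForm ℝ (Matrix (Fin N) (Fin p) ℝ)).IsPosSemidef where
  eq X Y := by
    have hMt : Mᵀ = M := by simpa using hM.isHermitian.eq
    simp only [Minner, LinearMap.mk₂_apply]
    rw [← trace_transpose, transpose_mul, transpose_mul, transpose_transpose, hMt,
      Matrix.mul_assoc]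
  nonneg X := by
    rw [Minner_apply_self, Mnorm2_eq_sum_dotProduct_mulVec]
    exact sum_nonneg fun l _ => by simpa using hM.dotProduct_mulVec_nonneg (Xᵀ l)

lemma Mnorm2_nonneg {M : Matrix (Fin N) (Fin N) ℝ} (hM : M.PosSemidef)
    (X : Matrix (Fin N) (Fin p) ℝ) : 0 ≤ Mnorm2 M X :=
  (isPosSemidef_Minner hM).isNonneg.nonneg X

lemma Mnorm2_smul (M : Matrix (Fin N) (Fin N) ℝ) (c : ℝ) (X : Matrix (Fin N) (Fin p) ℝ) :
    Mnorm2 M (c • X) = c ^ 2 * Mnorm2 M X := by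
  simp only [← Minner_apply_self, map_smul, LinearMap.smul_apply, smul_eq_mul]
  ring

lemma Mnorm2_le_mul_Mnorm2_one {M : Matrix (Fin N) (Fin N) ℝ} (hM : M.IsHermitian) {c : ℝ}
    (hc : ∀ i, hM.eigenvalues i ≤ c) (X : Matrix (Fin N) (Fin p) ℝ) :
    Mnorm2 M X ≤ c * Mnorm2 1 X := by
  simp only [Mnorm2_eq_sum_dotProduct_mulVec, one_mulVec, mul_sum]
  exact sum_le_sum fun l _ => hM.dotProduct_mulVec_le hc _

lemma mul_Mnorm2_one_le_Mnorm2 {M : Matrix (Fin N) (Fin N) ℝ} (hM : M.IsHermitian) {c : ℝ}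
    (hc : ∀ i, c ≤ hM.eigenvalues i) (X : Matrix (Fin N) (Fin p) ℝ) :
    c * Mnorm2 1 X ≤ Mnorm2 M X := by
  simp only [Mnorm2_eq_sum_dotProduct_mulVec, one_mulVec, mul_sum]
  exact sum_le_sum fun l _ => hM.le_dotProduct_mulVec hc _

lemma sum_Mnorm2_one_blockRestrict {n : ℕ} (b : Fin N → Fin n)
    (A : Matrix (Fin N) (Fin p) ℝ) : ∑ i, Mnorm2 1 (blockRestrict b i A) = Mnorm2 1 A := by
  simp only [Mnorm2_eq_sum_dotProduct_mulVec, one_mulVec, dotProduct, blockRestrict,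
    transpose_apply, of_apply, mul_ite, ite_mul, mul_zero, zero_mul]
  rw [sum_comm]
  refine sum_congr rfl fun l _ => ?_
  rw [sum_comm]
  simp

lemma sum_blockRestrict {n : ℕ} (b : Fin N → Fin n) (A : Matrix (Fin N) (Fin p) ℝ) :
    ∑ i, blockRestrict b i A = A := by
  ext j l
  simp [blockRestrict, Matrix.sum_apply]

lemma sum_Mnorm2_blockRestrict_le {n : ℕ} {M : Matrix (Fin N) (Fin N) ℝ} (hM : M.PosDef)
    {lmax lmin : ℝ} (hlmax : IsGreatest (Set.range hM.isHermitian.eigenvalues) lmax)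
    (hlmin : IsLeast (Set.range hM.isHermitian.eigenvalues) lmin)
    (b : Fin N → Fin n) (A : Matrix (Fin N) (Fin p) ℝ) :
    ∑ i, Mnorm2 M (blockRestrict b i A) ≤ lmax / lmin * Mnorm2 M A := by
  obtain ⟨i₀, hi₀⟩ := hlmin.1
  have hlmin_pos : 0 < lmin := hi₀ ▸ hM.eigenvalues_pos i₀
  have hlmax_nonneg : 0 ≤ lmax := hlmin_pos.le.trans (hi₀ ▸ hlmax.2 ⟨i₀, rfl⟩)
  have hupper := Mnorm2_le_mul_Mnorm2_one (p := p) hM.isHermitian (fun i => hlmax.2 ⟨i, rfl⟩)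
  have hlower := mul_Mnorm2_one_le_Mnorm2 hM.isHermitian (fun i => hlmin.2 ⟨i, rfl⟩) A
  calc ∑ i, Mnorm2 M (blockRestrict b i A)
      ≤ ∑ i, lmax * Mnorm2 1 (blockRestrict b i A) := sum_le_sum fun i _ => hupper _
    _ = lmax / lmin * (lmin * Mnorm2 1 A) := by
        rw [← mul_sum, sum_Mnorm2_one_blockRestrict]
        field_simp
    _ ≤ lmax / lmin * Mnorm2 M A := by gcongr

lemma sum_Mnorm2_blockRestrict_div_le {n : ℕ} {M : Matrix (Fin N) (Fin N) ℝ} (hM : M.PosDef)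
    {lmax lmin : ℝ} (hlmax : IsGreatest (Set.range hM.isHermitian.eigenvalues) lmax)
    (hlmin : IsLeast (Set.range hM.isHermitian.eigenvalues) lmin)
    {q : Fin n → ℝ} (hq : ∀ i, 0 < q i) {qmin : ℝ} (hqmin : IsLeast (Set.range q) qmin)
    (b : Fin N → Fin n) (A : Matrix (Fin N) (Fin p) ℝ) :
    ∑ i, Mnorm2 M (blockRestrict b i A) / q i ≤ lmax / lmin / qmin * Mnorm2 M A := by
  obtain ⟨i₀, rfl⟩ := hqmin.1
  calc ∑ i, Mnorm2 M (blockRestrict b i A) / q i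
      ≤ ∑ i, Mnorm2 M (blockRestrict b i A) / q i₀ := by
        gcongr with i
        · exact Mnorm2_nonneg hM.posSemidef _
        · exact hq i₀
        · exact hqmin.2 ⟨i, rfl⟩
    _ ≤ lmax / lmin * Mnorm2 M A / q i₀ := by
        rw [← sum_div]
        gcongr
        · exact (hq i₀).le
        · exact sum_Mnorm2_blockRestrict_le hM hlmax hlmin b A
    _ = lmax / lmin / q i₀ * Mnorm2 M A := by ring

end Mnorm

theorem fundamental_one_step_inequality_general (N p n : ℕ)
    (M : Matrix (Fin N) (Fin N) ℝ) (hM : M.PosDef)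
    (lmax lmin : ℝ)
    (hlmax : IsGreatest (Set.range hM.isHermitian.eigenvalues) lmax)
    (hlmin : IsLeast (Set.range hM.isHermitian.eigenvalues) lmin)
    (b : Fin N → Fin n)
    (T : Matrix (Fin N) (Fin p) ℝ → Matrix (Fin N) (Fin p) ℝ)
    (hT : ∀ X Y : Matrix (Fin N) (Fin p) ℝ,
      Mnorm2 M (T X - T Y) ≤ Mnorm2 M (X - Y))
    (Zstar : Matrix (Fin N) (Fin p) ℝ) (hfix : T Zstar = Zstar)
    (q : Fin n → ℝ) (hq : ∀ i, 0 < q i) (hqsum : ∑ i, q i = 1)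
    (qmin : ℝ) (hqmin : IsLeast (Set.range q) qmin)
    (τ k : ℕ)
    (Z : ℕ → Matrix (Fin N) (Fin p) ℝ)
    (J : Finset ℕ) (hJ : J ⊆ Finset.Ico (k - τ) k)
    (Zhat : Matrix (Fin N) (Fin p) ℝ)
    (hZhat : Zhat = Z k + ∑ d ∈ J, (Z d - Z (d + 1)))
    (η : ℝ) (hη : 0 < η)
    (Zbar : Matrix (Fin N) (Fin p) ℝ)
    (hZbar : Zbar = Z k - η • (Zhat - T Zhat))
    (ξ : ℝ) (hξ : 0 < ξ) :
    ∑ i, q i *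
        Mnorm2 M (Z k - (η / ((n : ℝ) * q i)) • blockRestrict b i (Zhat - T Zhat) - Zstar)
      ≤ Mnorm2 M (Z k - Zstar)
        + (ξ / (n : ℝ)) * ∑ d ∈ Finset.Ico (k - τ) k, Mnorm2 M (Z d - Z (d + 1))
        + (1 / (n : ℝ)) * ((τ : ℝ) / ξ + (lmax / lmin) / ((n : ℝ) * qmin) - 1 / η)
            * Mnorm2 M (Z k - Zbar) := by
  set S := Zhat - T Zhat
  have hB := isPosSemidef_Minner (p := p) hM.posSemidef
  have hexpand : ∑ i, q i * Mnorm2 M (Z k - (η / (n * q i)) • blockRestrict b i S - Zstar)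
      = Mnorm2 M (Z k - Zstar) - 2 * (η / n) * Minner M (Z k - Zstar) S
        + (η / n) ^ 2 * ∑ i, Mnorm2 M (blockRestrict b i S) / q i := by
    simp_rw [sub_right_comm _ _ Zstar, ← div_div, ← Minner_apply_self]
    rw [hB.isSymm.sum_mul_apply_sub_div_smul univ (fun i _ => (hq i).ne') hqsum,
      sum_blockRestrict]
  have hfirm : Mnorm2 M S ≤ 2 * Minner M (Zhat - Zstar) S :=
    hB.isSymm.apply_sub_self_le_of_nonexpansive hT hfix Zhat
  have hcross :=
    hB.neg_two_mul_apply_le_of_delayed hJ (τ := τ) (by simp; omega) _ hZhat hfirm hη hξ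
  simp only [Minner_apply_self] at hcross
  have hblocks := sum_Mnorm2_blockRestrict_div_le hM hlmax hlmin hq hqmin b S
  have hbar : Mnorm2 M (Z k - Zbar) = η ^ 2 * Mnorm2 M S := by
    rw [hZbar, sub_sub_cancel, Mnorm2_smul]
  have hcoeff : 1 / n * (τ / ξ + lmax / lmin / (n * qmin) - 1 / η) * (η ^ 2 * Mnorm2 M S)
      = 1 / n * ((τ * (η ^ 2 / ξ) - η) * Mnorm2 M S)
        + (η / n) ^ 2 * (lmax / lmin / qmin * Mnorm2 M S) := by
    have hη' : 1 / η * η ^ 2 = η := by field_simp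
    linear_combination (-(1 / n) * Mnorm2 M S) * hη'
  rw [hexpand, hbar, hcoeff]
  linear_combination (1 / n) * hcross + (η / n) ^ 2 * hblocks

/-- **Fundamental one-step inequality of the asynchronous algorithm.**
`M` is symmetric positive definite with extreme eigenvalues `lmax, lmin`
(condition number `κ = lmax/lmin`); rows are partitioned into `n` blocks by the
surjective map `b`; `T` is nonexpansive in the `M`-norm with residual `S = I - T`;
`Zstar` is a fixed point of `T`; `q i > 0` sum to one with minimum `qmin`;
`Ẑ = Z^k + Σ_{d∈J}(Z^d - Z^{d+1})` is the delayed iterate with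
`J ⊆ {k-τ,…,k-1}`; and `Z̄ = Z^k - η·SẐ` is the virtual full update.  Then for
every `ξ > 0`, the weighted average over the agent `i` performing the update
`Z^{k+1} = Z^k - (η/(n qᵢ))·SᵢẐ` satisfies
`Σᵢ qᵢ ‖Z^{k+1,i} - Z*‖²_M ≤ ‖Z^k - Z*‖²_M
  + (ξ/n) Σ_{d=k-τ}^{k-1} ‖Z^d - Z^{d+1}‖²_M
  + (1/n)(τ/ξ + κ/(n qmin) - 1/η) ‖Z^k - Z̄‖²_M`. -/
theorem fundamental_one_step_inequality (N p n : ℕ)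
    (M : Matrix (Fin N) (Fin N) ℝ) (hM : M.PosDef)
    (lmax lmin : ℝ)
    (hlmax : IsGreatest (Set.range hM.isHermitian.eigenvalues) lmax)
    (hlmin : IsLeast (Set.range hM.isHermitian.eigenvalues) lmin)
    (b : Fin N → Fin n) (hb : Function.Surjective b)
    (T : Matrix (Fin N) (Fin p) ℝ → Matrix (Fin N) (Fin p) ℝ)
    (hT : ∀ X Y : Matrix (Fin N) (Fin p) ℝ,
      Mnorm2 M (T X - T Y) ≤ Mnorm2 M (X - Y))
    (Zstar : Matrix (Fin N) (Fin p) ℝ) (hfix : T Zstar = Zstar)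
    (q : Fin n → ℝ) (hq : ∀ i, 0 < q i) (hqsum : ∑ i, q i = 1)
    (qmin : ℝ) (hqmin : IsLeast (Set.range q) qmin)
    (τ k : ℕ) (hτk : τ ≤ k)
    (Z : ℕ → Matrix (Fin N) (Fin p) ℝ)
    (J : Finset ℕ) (hJ : J ⊆ Finset.Ico (k - τ) k)
    (Zhat : Matrix (Fin N) (Fin p) ℝ)
    (hZhat : Zhat = Z k + ∑ d ∈ J, (Z d - Z (d + 1)))
    (η : ℝ) (hη : 0 < η)
    (Zbar : Matrix (Fin N) (Fin p) ℝ)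
    (hZbar : Zbar = Z k - η • (Zhat - T Zhat))
    (ξ : ℝ) (hξ : 0 < ξ) :
    ∑ i, q i *
        Mnorm2 M (Z k - (η / ((n : ℝ) * q i)) • blockRestrict b i (Zhat - T Zhat) - Zstar)
      ≤ Mnorm2 M (Z k - Zstar)
        + (ξ / (n : ℝ)) * ∑ d ∈ Finset.Ico (k - τ) k, Mnorm2 M (Z d - Z (d + 1))
        + (1 / (n : ℝ)) * ((τ : ℝ) / ξ + (lmax / lmin) / ((n : ℝ) * qmin) - 1 / η)
            * Mnorm2 M (Z k - Zbar) :=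
  fundamental_one_step_inequality_general N p n M hM lmax lmin hlmax hlmin b T hT Zstar hfix q hq
    hqsum qmin hqmin τ k Z J hJ Zhat hZhat η hη Zbar hZbar ξ hξ
end
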